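/- arXiv:2002.07043 — 4 statements merged into one kernel-verified Lean document; each statement's English description precedes it below -/
import Mathlib

section
/- For every nonnegative integer i, the binomial coefficient identity binom(F_{2i+2}·F_{2i+3}, F_{2i}·F_{2i+3}) = binom(F_{2i+2}·F_{2i+3} − 1, F_{2i}·F_{2i+3} + 1) holds, where F_j denotes the j-th Fibonacci number. -/
lemma fib_cassini_odd : ∀ i : ℕ, Nat.fib (2*i+1) * Nat.fib (2*i+1) = Nat.fib (2*i) * Nat.fib (2*i+2) + 1 := by
  intro i
  induction i with
  | zero => simp
  | succ n ih =>
    have h2 : 2*(n+1)+1 = 2*n+3 := by ring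
    have h3 : 2*(n+1)+2 = 2*n+4 := by ring
    have h1 : 2*(n+1) = 2*n+2 := by ring
    have e4 : Nat.fib (2*n+4) = Nat.fib (2*n+2) + Nat.fib (2*n+3) := Nat.fib_add_two
    have e3 : Nat.fib (2*n+3) = Nat.fib (2*n+1) + Nat.fib (2*n+2) := Nat.fib_add_two
    have e2 : Nat.fib (2*n+2) = Nat.fib (2*n) + Nat.fib (2*n+1) := Nat.fib_add_two
    rw [h2, h3, h1, e4, e3, e2]
    nlinarith [ih]

lemma choose_shift (k m' : ℕ) (h : (k+1)*(k+m'+2) = (m'+2)*(m'+1)) :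
    Nat.choose (k+m'+2) k = Nat.choose (k+m'+1) (k+1) := by
  have h1 := Nat.choose_mul_factorial_mul_factorial (show k ≤ k+m'+2 by omega)
  have h2 := Nat.choose_mul_factorial_mul_factorial (show k+1 ≤ k+m'+1 by omega)
  have hs1 : k+m'+2-k = m'+2 := by omega
  have hs2 : k+m'+1-(k+1) = m' := by omega
  rw [hs1] at h1
  rw [hs2] at h2
  have hpos : 0 < (k+1).factorial * (m'+2).factorial :=
    Nat.mul_pos (Nat.factorial_pos _) (Nat.factorial_pos _)
  apply Nat.eq_of_mul_eq_mul_right hpos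
  have e1 : Nat.choose (k+m'+2) k * ((k+1).factorial * (m'+2).factorial)
      = (k+1) * ((k+m'+2).factorial) := by
    rw [← h1, Nat.factorial_succ (k)]
    ring
  have e2 : Nat.choose (k+m'+1) (k+1) * ((k+1).factorial * (m'+2).factorial)
      = ((m'+2)*(m'+1)) * ((k+m'+1).factorial) := by
    rw [← h2, Nat.factorial_succ (m'+1), Nat.factorial_succ m']
    ring
  rw [e1, e2, show k+m'+2 = (k+m'+1)+1 from rfl, Nat.factorial_succ, ← h]
  ring

theorem fib_binomial_collision (i : ℕ) :
    Nat.choose (Nat.fib (2*i+2) * Nat.fib (2*i+3)) (Nat.fib (2*i) * Nat.fib (2*i+3)) =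
      Nat.choose (Nat.fib (2*i+2) * Nat.fib (2*i+3) - 1) (Nat.fib (2*i) * Nat.fib (2*i+3) + 1) := by
  set a := Nat.fib (2*i) with ha
  set b := Nat.fib (2*i+1) with hb
  have hc : Nat.fib (2*i+2) = a + b := Nat.fib_add_two
  have hd : Nat.fib (2*i+3) = b + (a+b) := by
    rw [show 2*i+3 = (2*i+1)+2 from rfl, Nat.fib_add_two, hc]
  have hcas : b * b = a * (a+b) + 1 := by
    have := fib_cassini_odd i
    rw [hc] at this
    exact this
  have hb1 : 1 ≤ b := Nat.fib_pos.mpr (by omega)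
  set d := b + (a+b) with hdd
  have hd2 : 2 ≤ d := by omega
  have hm2 : 2 ≤ b * d := by nlinarith
  set k := a * d with hk
  set m' := b * d - 2 with hm'
  have hmeq : b * d = m' + 2 := by omega
  have hn : (a+b) * d = k + m' + 2 := by
    have h' : (a+b)*d = a*d + b*d := by ring
    omega
  have key : (k+1)*(k+m'+2) = (m'+2)*(m'+1) := by
    have h6 : b*b*(d*d) = (a*(a+b)+1)*(d*d) := by rw [hcas]
    have h5 : (k+1)*(k+m'+2) + (m'+2) = (m'+2)*(m'+2) := by
      rw [← hn, ← hmeq, hk]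
      have h7 : (a+b)*d + b*d = d*d := by rw [hdd]; ring
      nlinarith [h6, h7]
    nlinarith [h5]
  have hsub : (a+b) * d - 1 = k + m' + 1 := by omega
  rw [hc, hd]
  rw [hsub, hn]
  exact choose_shift k m' key
end

section
/- Let n, m, k, l, δ be integers with δ ∈ {0,1}, 0 ≤ m < k < n/2, l > δ, satisfying binom(2n+δ, n−m) = binom(2n+l, n−k). Then (l−δ)·log((2n+l)/(n+k+l)) < (k−m)(k+m+δ+1)/(n−k). -/
private lemma choose_succ_left (N r : ℕ) :
    (N + 1) * Nat.choose N r = Nat.choose (N + 1) r * (N + 1 - r) := by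
  have h1 := Nat.add_one_mul_choose_eq N r
  have h2 := Nat.choose_succ_right_eq (N + 1) r
  simpa [Nat.succ_eq_add_one] using h1.trans h2

set_option maxHeartbeats 800000 in
theorem collision_log_upper (n m k l δ : ℕ)
    (hδ : δ ≤ 1) (hmk : m < k) (hkn : 2*k < n) (hlδ : δ < l)
    (hcol : Nat.choose (2*n+δ) (n-m) = Nat.choose (2*n+l) (n-k)) :
    ((l : ℝ) - δ) * Real.log ((2*n+l) / (n+k+l)) <
      ((k : ℝ) - m) * ((k : ℝ) + m + δ + 1) / ((n : ℝ) - k) := by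
  have hkn' : k < n := by omega
  have hknR : (k : ℝ) < n := by exact_mod_cast hkn'
  have hD : (0:ℝ) < (n : ℝ) - k := by linarith
  have hnpos : (0:ℝ) < (n : ℝ) := by
    have : 0 < n := by omega
    exact_mod_cast this
  set b : ℝ := (2*(n:ℝ)+l) / ((n:ℝ)+k+l) with hb
  have hdenb : (0:ℝ) < (n:ℝ)+k+l := by positivity
  have hb1 : (1:ℝ) ≤ b := by
    rw [hb, le_div_iff₀ hdenb]
    have hl : (0:ℝ) ≤ (l:ℝ) := by positivity
    linarith
  have hbpos : (0:ℝ) < b := by linarith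
  -- Lemma A
  have hA : ∀ d, d ≤ l - δ →
      (Nat.choose (2*n+δ) (n-k) : ℝ) * b ^ d ≤ (Nat.choose (2*n+δ+d) (n-k) : ℝ) := by
    intro d
    induction d with
    | zero => intro _; simp
    | succ d ih =>
      intro hd
      have ih' := ih (by omega)
      have hnat : (2*n+δ+d+1) * Nat.choose (2*n+δ+d) (n-k)
          = Nat.choose (2*n+δ+d+1) (n-k) * (n+k+δ+d+1) := by
        have h := choose_succ_left (2*n+δ+d) (n-k)
        have h2 : 2*n+δ+d+1 - (n-k) = n+k+δ+d+1 := by omega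
        rw [h2] at h
        exact h
      have hnatR : (2*(n:ℝ)+δ+d+1) * (Nat.choose (2*n+δ+d) (n-k) : ℝ)
          = (Nat.choose (2*n+δ+d+1) (n-k) : ℝ) * ((n:ℝ)+k+δ+d+1) := by
        exact_mod_cast hnat
      have hden2 : (0:ℝ) < (n:ℝ)+k+δ+d+1 := by positivity
      have hfac : b ≤ (2*(n:ℝ)+δ+d+1) / ((n:ℝ)+k+δ+d+1) := by
        rw [hb, div_le_div_iff₀ hdenb hden2]
        have hu : (δ:ℝ)+d+1 ≤ (l:ℝ) := by
          have : δ+d+1 ≤ l := by omega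
          exact_mod_cast this
        nlinarith [hknR, hu]
      have hchnn : (0:ℝ) ≤ (Nat.choose (2*n+δ+d) (n-k) : ℝ) := by positivity
      calc (Nat.choose (2*n+δ) (n-k) : ℝ) * b ^ (d+1)
          = ((Nat.choose (2*n+δ) (n-k) : ℝ) * b ^ d) * b := by ring
        _ ≤ (Nat.choose (2*n+δ+d) (n-k) : ℝ) * b :=
            mul_le_mul_of_nonneg_right ih' (le_of_lt hbpos)
        _ ≤ (Nat.choose (2*n+δ+d) (n-k) : ℝ) * ((2*(n:ℝ)+δ+d+1) / ((n:ℝ)+k+δ+d+1)) :=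
            mul_le_mul_of_nonneg_left hfac hchnn
        _ = (Nat.choose (2*n+δ+d+1) (n-k) : ℝ) := by
            rw [mul_div_assoc', div_eq_iff (ne_of_gt hden2)]
            linarith [hnatR]
  -- Lemma C
  have hC : ∀ j, j ≤ k - m →
      Real.log (Nat.choose (2*n+δ) (n-k+j)) ≤
        Real.log (Nat.choose (2*n+δ) (n-k)) + ((j:ℝ)*(2*(k:ℝ)+δ) - (j:ℝ)*(j:ℝ))/((n:ℝ)-k) := by
    intro j
    induction j with
    | zero => intro _; simp
    | succ j ih =>
      intro hj
      have ih' := ih (by omega)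
      have hjk : j < k := by omega
      have hnat : Nat.choose (2*n+δ) (n-k+j+1) * (n-k+j+1)
          = Nat.choose (2*n+δ) (n-k+j) * (n+k+δ-j) := by
        have h := Nat.choose_succ_right_eq (2*n+δ) (n-k+j)
        have h2 : 2*n+δ - (n-k+j) = n+k+δ-j := by omega
        rw [h2] at h
        exact h
      have hcast1 : ((n-k+j+1 : ℕ) : ℝ) = (n:ℝ)-k+j+1 := by
        have := Nat.cast_sub (le_of_lt hkn') (R := ℝ)
        push_cast [this]
        ring
      have hcast2 : ((n+k+δ-j : ℕ) : ℝ) = (n:ℝ)+k+δ-j := by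
        have hle : j ≤ n+k+δ := by omega
        push_cast [Nat.cast_sub hle]
        ring
      have hnatR : (Nat.choose (2*n+δ) (n-k+j+1) : ℝ) * ((n:ℝ)-k+j+1)
          = (Nat.choose (2*n+δ) (n-k+j) : ℝ) * ((n:ℝ)+k+δ-j) := by
        rw [← hcast1, ← hcast2]
        exact_mod_cast hnat
      have hden3 : (0:ℝ) < (n:ℝ)-k+j+1 := by positivity
      have hnum3 : (0:ℝ) < (n:ℝ)+k+δ-j := by
        have : (j:ℝ) < k := by exact_mod_cast hjk
        linarith
      have hpos1 : (0:ℝ) < (Nat.choose (2*n+δ) (n-k+j+1) : ℝ) := by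
        have : 0 < Nat.choose (2*n+δ) (n-k+j+1) := Nat.choose_pos (by omega)
        exact_mod_cast this
      have hpos2 : (0:ℝ) < (Nat.choose (2*n+δ) (n-k+j) : ℝ) := by
        have : 0 < Nat.choose (2*n+δ) (n-k+j) := Nat.choose_pos (by omega)
        exact_mod_cast this
      have hval : (Nat.choose (2*n+δ) (n-k+j+1) : ℝ)
          = (Nat.choose (2*n+δ) (n-k+j) : ℝ) * (((n:ℝ)+k+δ-j)/((n:ℝ)-k+j+1)) := by
        rw [mul_div_assoc', eq_div_iff (ne_of_gt hden3)]
        linarith [hnatR]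
      have hfracpos : (0:ℝ) < ((n:ℝ)+k+δ-j)/((n:ℝ)-k+j+1) := by positivity
      have hlog : Real.log (Nat.choose (2*n+δ) (n-k+j+1))
          = Real.log (Nat.choose (2*n+δ) (n-k+j))
            + Real.log (((n:ℝ)+k+δ-j)/((n:ℝ)-k+j+1)) := by
        rw [hval, Real.log_mul (ne_of_gt hpos2) (ne_of_gt hfracpos)]
      have hlogfrac : Real.log (((n:ℝ)+k+δ-j)/((n:ℝ)-k+j+1))
          ≤ (2*(k:ℝ)+δ-2*j-1)/((n:ℝ)-k+j+1) := by
        have h1 := Real.log_le_sub_one_of_pos hfracpos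
        have h2 : ((n:ℝ)+k+δ-j)/((n:ℝ)-k+j+1) - 1 = (2*(k:ℝ)+δ-2*j-1)/((n:ℝ)-k+j+1) := by
          field_simp
          ring
        linarith [h1, h2 ▸ h1]
      have hnumnn : (0:ℝ) ≤ 2*(k:ℝ)+δ-2*j-1 := by
        have : (j:ℝ) ≤ (k:ℝ) - 1 := by
          have : j + 1 ≤ k := by omega
          have := (Nat.cast_le (α := ℝ)).2 this
          push_cast at this
          linarith
        linarith
      have hfrac2 : (2*(k:ℝ)+δ-2*j-1)/((n:ℝ)-k+j+1) ≤ (2*(k:ℝ)+δ-2*j-1)/((n:ℝ)-k) := by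
        have hj1 : (0:ℝ) ≤ (j:ℝ)+1 := by positivity
        rw [div_le_div_iff₀ (by positivity) hD]
        nlinarith [mul_nonneg hnumnn hj1]
      calc Real.log (Nat.choose (2*n+δ) (n-k+j+1))
          ≤ Real.log (Nat.choose (2*n+δ) (n-k+j)) + (2*(k:ℝ)+δ-2*j-1)/((n:ℝ)-k) := by
            rw [hlog]; linarith [hlogfrac, hfrac2]
        _ ≤ Real.log (Nat.choose (2*n+δ) (n-k))
            + ((j:ℝ)*(2*(k:ℝ)+δ) - (j:ℝ)*(j:ℝ))/((n:ℝ)-k) + (2*(k:ℝ)+δ-2*j-1)/((n:ℝ)-k) := by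
            linarith [ih']
        _ = Real.log (Nat.choose (2*n+δ) (n-k))
            + ((((j:ℕ)+1 : ℕ):ℝ)*(2*(k:ℝ)+δ) - (((j:ℕ)+1 : ℕ):ℝ)*(((j:ℕ)+1 : ℕ):ℝ))/((n:ℝ)-k) := by
            push_cast
            field_simp
            ring
  -- Assemble
  have hAend := hA (l - δ) le_rfl
  rw [show 2*n+δ+(l-δ) = 2*n+l by omega, ← hcol] at hAend
  have hCend := hC (k - m) le_rfl
  rw [show n-k+(k-m) = n-m by omega] at hCend
  have hc0pos : (0:ℝ) < (Nat.choose (2*n+δ) (n-k) : ℝ) := by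
    have : 0 < Nat.choose (2*n+δ) (n-k) := Nat.choose_pos (by omega)
    exact_mod_cast this
  have hlhspos : (0:ℝ) < (Nat.choose (2*n+δ) (n-k) : ℝ) * b ^ (l - δ) := by positivity
  have hlogA : Real.log ((Nat.choose (2*n+δ) (n-k) : ℝ) * b ^ (l - δ))
      ≤ Real.log (Nat.choose (2*n+δ) (n-m)) := Real.log_le_log hlhspos hAend
  rw [Real.log_mul (ne_of_gt hc0pos) (by positivity), Real.log_pow] at hlogA
  have hLcast : ((l - δ : ℕ) : ℝ) = (l:ℝ) - δ := by
    have := Nat.cast_sub (le_of_lt hlδ) (R := ℝ)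
    exact this
  rw [hLcast] at hlogA
  have hKM : ((k - m : ℕ) : ℝ) = (k:ℝ) - m := Nat.cast_sub (le_of_lt hmk)
  rw [hKM] at hCend
  have hmain : ((l:ℝ) - δ) * Real.log b
      ≤ (((k:ℝ)-m)*(2*(k:ℝ)+δ) - ((k:ℝ)-m)*((k:ℝ)-m))/((n:ℝ)-k) := by
    linarith [hlogA, hCend]
  have hfinal : (((k:ℝ)-m)*(2*(k:ℝ)+δ) - ((k:ℝ)-m)*((k:ℝ)-m))/((n:ℝ)-k)
      < ((k:ℝ) - m) * ((k:ℝ) + m + δ + 1) / ((n:ℝ) - k) := by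
    rw [div_lt_div_iff₀ hD hD]
    have hkm1 : (1:ℝ) ≤ (k:ℝ) - m := by
      have : m + 1 ≤ k := hmk
      have := (Nat.cast_le (α := ℝ)).2 this
      push_cast at this
      linarith
    nlinarith [hD, hkm1]
  exact lt_of_le_of_lt hmain hfinal
end

section
/- For any integer ν > 1, (ν/e)^ν · √(2πν) · e^{1/(12(ν+1))} < ν! < (ν/e)^ν · √(2πν) · e^{1/(12ν)}. -/
/-!
The sequence `s n = n! / (√(2n) (n/e)^n)` (`Stirling.stirlingSeq`) tends to `√π`.
The difference `log s (n+1) - log s (n+2)` has the series expansion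
`∑ₖ r^(k+1) / (2k+3)` with `r = 1/(2n+3)²`. Comparing it with its first term from below and
with the geometric series `∑ₖ r^(k+1) / 3` from above squeezes it strictly between
`1/(12(n+2)(n+3))` and `1/(12(n+1)(n+2))`. Hence `log s n - 1/(12n)` increases strictly and
`log s n - 1/(12(n+1))` decreases strictly; both tend to `log √π`, which gives Robbins' bounds
`√π e^{1/(12(n+1))} < s n < √π e^{1/(12n)}`.
-/

open Real Filter Topology Nat

namespace Stirling

theorem log_stirlingSeq_sdiff_lt (n : ℕ) :
    log (stirlingSeq (n + 1)) - log (stirlingSeq (n + 2)) < 1 / (12 * (n + 1) * (n + 2)) := by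
  set r : ℝ := (1 / (2 * ((n + 1 : ℕ) : ℝ) + 1)) ^ 2 with hr
  have hr0 : 0 < r := by positivity
  have h1r : 1 - r = 4 * (n + 1) * (n + 2) * r := by
    rw [hr]; push_cast; field_simp; ring
  have hr1 : r < 1 := by
    have : 0 < 4 * ((n : ℝ) + 1) * (n + 2) * r := by positivity
    linarith
  have hgeo : HasSum (fun k : ℕ => r ^ (k + 1) / 3) (r * (1 - r)⁻¹ / 3) := by
    simpa only [_root_.pow_succ'] using
      ((hasSum_geometric_of_lt_one hr0.le hr1).mul_left r).div_const 3
  have hsum : r * (1 - r)⁻¹ / 3 = 1 / (12 * (n + 1) * (n + 2)) := by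
    rw [h1r]; field_simp; ring
  rw [← hsum]
  refine hasSum_lt (i := 1) (fun k => ?_) ?_ (log_stirlingSeq_sdiff_hasSum n) hgeo
  · have : (3 : ℝ) ≤ 2 * (k + 1 : ℕ) + 1 := by
      push_cast; linarith [k.cast_nonneg (α := ℝ)]
    rw [one_div_mul_eq_div]
    gcongr
  · rw [one_div_mul_eq_div]
    gcongr
    norm_num

theorem lt_log_stirlingSeq_sdiff (n : ℕ) :
    1 / (12 * (n + 2) * (n + 3)) < log (stirlingSeq (n + 1)) - log (stirlingSeq (n + 2)) := by
  refine lt_of_lt_of_le ?_ (le_hasSum (log_stirlingSeq_sdiff_hasSum n) 0 fun k _ => by positivity)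
  calc 1 / (12 * ((n : ℝ) + 2) * (n + 3)) < 1 / (3 * (2 * ((n : ℝ) + 1) + 1) ^ 2) := by
        refine one_div_lt_one_div_of_lt (by positivity) ?_
        nlinarith [n.cast_nonneg (α := ℝ)]
    _ = _ := by push_cast; field_simp; ring

theorem strictMono_log_stirlingSeq_sub :
    StrictMono fun n : ℕ => log (stirlingSeq (n + 1)) - 1 / (12 * ((n : ℝ) + 1)) := by
  refine strictMono_nat_of_lt_succ fun n => ?_
  have h := log_stirlingSeq_sdiff_lt n
  have hsplit : 1 / (12 * ((n : ℝ) + 1) * (n + 2)) = 1 / (12 * (n + 1)) - 1 / (12 * (n + 2)) := by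
    field_simp; ring
  push_cast
  rw [show (n : ℝ) + 1 + 1 = n + 2 by ring]
  linarith

theorem strictAnti_log_stirlingSeq_sub :
    StrictAnti fun n : ℕ => log (stirlingSeq (n + 1)) - 1 / (12 * ((n : ℝ) + 2)) := by
  refine strictAnti_nat_of_succ_lt fun n => ?_
  have h := lt_log_stirlingSeq_sdiff n
  have hsplit : 1 / (12 * ((n : ℝ) + 2) * (n + 3)) = 1 / (12 * (n + 2)) - 1 / (12 * (n + 3)) := by
    field_simp; ring
  push_cast
  rw [show (n : ℝ) + 1 + 2 = n + 3 by ring]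
  linarith

theorem tendsto_log_stirlingSeq_sub (c : ℝ) :
    Tendsto (fun n : ℕ => log (stirlingSeq (n + 1)) - 1 / (12 * ((n : ℝ) + c))) atTop
      (𝓝 (log √π)) := by
  have hlog : Tendsto (fun n : ℕ => log (stirlingSeq (n + 1))) atTop (𝓝 (log √π)) :=
    ((continuousAt_log (by positivity)).tendsto.comp
      (tendsto_stirlingSeq_sqrt_pi.comp (tendsto_add_atTop_nat 1)))
  have hzero : Tendsto (fun n : ℕ => 1 / (12 * ((n : ℝ) + c))) atTop (𝓝 0) :=
    tendsto_const_nhds.div_atTop <| (tendsto_atTop_add_const_right atTop c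
      tendsto_natCast_atTop_atTop).const_mul_atTop (by norm_num)
  simpa using hlog.sub hzero

theorem stirlingSeq_lt_sqrt_pi_mul_exp {n : ℕ} (hn : n ≠ 0) :
    stirlingSeq n < √π * exp (1 / (12 * n)) := by
  obtain ⟨m, rfl⟩ := Nat.exists_eq_add_one_of_ne_zero hn
  have h := (strictMono_log_stirlingSeq_sub m.lt_succ_self).trans_le
    (strictMono_log_stirlingSeq_sub.monotone.ge_of_tendsto (tendsto_log_stirlingSeq_sub 1) (m + 1))
  rw [← log_lt_log_iff (stirlingSeq'_pos m) (by positivity), log_mul (by positivity)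
    (by positivity), log_exp]
  push_cast
  linarith

theorem sqrt_pi_mul_exp_lt_stirlingSeq {n : ℕ} (hn : n ≠ 0) :
    √π * exp (1 / (12 * (n + 1))) < stirlingSeq n := by
  obtain ⟨m, rfl⟩ := Nat.exists_eq_add_one_of_ne_zero hn
  have h := (strictAnti_log_stirlingSeq_sub.antitone.le_of_tendsto
    (tendsto_log_stirlingSeq_sub 2) (m + 1)).trans_lt
    (strictAnti_log_stirlingSeq_sub m.lt_succ_self)
  rw [← log_lt_log_iff (by positivity) (stirlingSeq'_pos m), log_mul (by positivity)
    (by positivity), log_exp]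
  push_cast at h ⊢
  rw [show (m : ℝ) + 1 + 1 = m + 2 by ring]
  linarith

end Stirling

open Real in
theorem robbins_stirling (ν : ℕ) (hν : 1 < ν) :
    ((ν : ℝ) / exp 1) ^ ν * Real.sqrt (2 * π * ν) * exp (1 / (12 * (ν + 1))) <
        (Nat.factorial ν : ℝ) ∧
      (Nat.factorial ν : ℝ) < ((ν : ℝ) / exp 1) ^ ν * Real.sqrt (2 * π * ν) * exp (1 / (12 * ν)) := by
  have hν0 : ν ≠ 0 := by omega
  have hscale : 0 < √(2 * ν) * ((ν : ℝ) / exp 1) ^ ν := by positivity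
  have hfact : (ν ! : ℝ) = Stirling.stirlingSeq ν * (√(2 * ν) * ((ν : ℝ) / exp 1) ^ ν) := by
    rw [Stirling.stirlingSeq, div_mul_cancel₀ _ hscale.ne']
  have hsqrt : √(2 * π * ν) = √π * √(2 * ν) := by
    rw [← sqrt_mul pi_pos.le]; ring_nf
  rw [hfact, hsqrt]
  constructor
  · refine lt_of_eq_of_lt ?_
      (mul_lt_mul_of_pos_right (Stirling.sqrt_pi_mul_exp_lt_stirlingSeq hν0) hscale)
    ring
  · refine lt_of_lt_of_eq
      (mul_lt_mul_of_pos_right (Stirling.stirlingSeq_lt_sqrt_pi_mul_exp hν0) hscale) ?_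
    ring
end

section
/- Let n, m, k, l, δ be integers with δ ∈ {0,1}, 0 ≤ m < k < n/2, l > δ, satisfying binom(2n+δ, n−m) = binom(2n+l, n−k), and set m₀ = max(m+δ, ⌊l/2⌋), k₀ = 2(k+l) − δ − 1. Then (n−k)^{2k+l−m−m₀−π(k₀)} ≤ (2k+l)^{π(k₀)} · (k−m)! · (l+k−m₀)!. -/
open Finset

private lemma card_multiples_Ico_le (d a b : ℕ) (hd : 0 < d) (ha : 0 < a) :
    ((Finset.Ico a b).filter (d ∣ ·)).card ≤ (b - a) / d + 1 := by
  rcases le_or_gt b a with h | h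
  · rw [Finset.Ico_eq_empty (by omega)]
    simp
  · have h1 : Finset.Ico a b = Finset.Ioc (a-1) (b-1) := by
      ext x; simp only [Finset.mem_Ico, Finset.mem_Ioc]; omega
    have h2 : Finset.Ioc 0 (a-1) ∪ Finset.Ioc (a-1) (b-1) = Finset.Ioc 0 (b-1) :=
      Finset.Ioc_union_Ioc_eq_Ioc (by omega) (by omega)
    have hdisj : Disjoint (Finset.Ioc 0 (a-1)) (Finset.Ioc (a-1) (b-1)) := by
      rw [Finset.disjoint_left]
      intro x h1 h2
      rw [Finset.mem_Ioc] at h1 h2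
      omega
    have hcard : (b-1)/d = (a-1)/d + ((Finset.Ioc (a-1) (b-1)).filter (d ∣ ·)).card := by
      rw [← Nat.Ioc_filter_dvd_card_eq_div, ← Nat.Ioc_filter_dvd_card_eq_div, ← h2,
        Finset.filter_union, Finset.card_union_of_disjoint
          (Finset.disjoint_filter_filter hdisj)]
    have hdiv : (b-1)/d ≤ (a-1)/d + ((b-a)/d + 1) := by
      have e : b - 1 = (a-1) + (b - a) := by omega
      rw [e, Nat.add_div hd]
      split <;> omega
    rw [h1]; omega

private lemma factorization_prod_Ico (p a b e : ℕ) (hp : p.Prime) (ha : 0 < a)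
    (he : ∀ x ∈ Finset.Ico a b, x.factorization p ≤ e) :
    (∏ x ∈ Finset.Ico a b, x).factorization p
      = ∑ j ∈ Finset.Ico 1 (e+1), ((Finset.Ico a b).filter (p^j ∣ ·)).card := by
  have hne : ∀ x ∈ Finset.Ico a b, x ≠ 0 := fun x hx => by
    have := (Finset.mem_Ico.mp hx).1; omega
  rw [Nat.factorization_prod hne, Finset.sum_apply']
  have key : ∀ x ∈ Finset.Ico a b, x.factorization p
      = ((Finset.Ico 1 (e+1)).filter (fun j => p^j ∣ x)).card := by
    intro x hx
    have h1 : (Finset.Ico 1 (e+1)).filter (fun j => p^j ∣ x)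
        = Finset.Ico 1 (x.factorization p + 1) := by
      ext j
      simp only [Finset.mem_filter, Finset.mem_Ico]
      constructor
      · rintro ⟨hj, hdvd⟩
        have := (Nat.Prime.pow_dvd_iff_le_factorization hp (hne x hx)).mp hdvd
        omega
      · intro hj
        refine ⟨⟨hj.1, by have := he x hx; omega⟩, ?_⟩
        exact (Nat.Prime.pow_dvd_iff_le_factorization hp (hne x hx)).mpr (by omega)
    rw [h1, Nat.card_Ico]; omega
  rw [Finset.sum_congr rfl key]
  simp only [Finset.card_filter]
  rw [Finset.sum_comm]

private lemma sum_div_le_factorization_factorial (p t e : ℕ) (hp : p.Prime) :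
    ∑ j ∈ Finset.Ico 1 (e+1), t / p^j ≤ (Nat.factorial t).factorization p := by
  have h : Nat.factorial t = ∏ x ∈ Finset.Ico 1 (t+1), x :=
    (Finset.prod_Ico_id_eq_factorial t).symm
  have hbound : ∀ x ∈ Finset.Ico 1 (t+1), x.factorization p ≤ max e t := by
    intro x hx
    rw [Finset.mem_Ico] at hx
    have := Nat.factorization_lt (n := x) p (by omega)
    omega
  rw [h, factorization_prod_Ico p 1 (t+1) (max e t) hp one_pos hbound]
  have hcnt : ∀ j, ((Finset.Ico 1 (t+1)).filter (p^j ∣ ·)).card = t / p^j := by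
    intro j
    have : Finset.Ico 1 (t+1) = Finset.Ioc 0 t := by
      ext x; simp only [Finset.mem_Ico, Finset.mem_Ioc]; omega
    rw [this, Nat.Ioc_filter_dvd_card_eq_div]
  calc ∑ j ∈ Finset.Ico 1 (e+1), t / p^j
      = ∑ j ∈ Finset.Ico 1 (e+1), ((Finset.Ico 1 (t+1)).filter (p^j ∣ ·)).card := by
        exact Finset.sum_congr rfl fun j _ => (hcnt j).symm
    _ ≤ ∑ j ∈ Finset.Ico 1 (max e t + 1), ((Finset.Ico 1 (t+1)).filter (p^j ∣ ·)).card := by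
        apply Finset.sum_le_sum_of_subset
        apply Finset.Ico_subset_Ico le_rfl (by omega)

private lemma factorization_prod_Ico_le (p a b e : ℕ) (hp : p.Prime) (ha : 0 < a)
    (he : ∀ x ∈ Finset.Ico a b, x.factorization p ≤ e) :
    (∏ x ∈ Finset.Ico a b, x).factorization p
      ≤ (Nat.factorial (b - a)).factorization p + e := by
  rw [factorization_prod_Ico p a b e hp ha he]
  calc ∑ j ∈ Finset.Ico 1 (e+1), ((Finset.Ico a b).filter (p^j ∣ ·)).card
      ≤ ∑ j ∈ Finset.Ico 1 (e+1), ((b-a)/p^j + 1) := by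
        apply Finset.sum_le_sum
        intro j _
        exact card_multiples_Ico_le _ _ _ (pow_pos hp.pos j) ha
    _ = (∑ j ∈ Finset.Ico 1 (e+1), (b-a)/p^j) + e := by
        rw [Finset.sum_add_distrib, Finset.sum_const, Nat.card_Ico]
        simp
    _ ≤ (Nat.factorial (b - a)).factorization p + e := by
        exact Nat.add_le_add_right (sum_div_le_factorization_factorial p (b-a) e hp) e

private lemma prod_pow_factorization_dvd (s : Finset ℕ) (x : ℕ) (hx : x ≠ 0) :
    (∏ p ∈ s, p ^ x.factorization p) ∣ x := by
  have h1 : ∏ p ∈ s.filter (· ∈ x.factorization.support), p ^ x.factorization p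
      = ∏ p ∈ s, p ^ x.factorization p := by
    apply Finset.prod_subset (Finset.filter_subset _ s)
    intro p hp hnp
    have : p ∉ x.factorization.support := by
      intro hmem
      exact hnp (Finset.mem_filter.mpr ⟨hp, hmem⟩)
    rw [Finsupp.notMem_support_iff.mp this, pow_zero]
  rw [← h1]
  have h2 : (∏ p ∈ s.filter (· ∈ x.factorization.support), p ^ x.factorization p)
      ∣ ∏ p ∈ x.factorization.support, p ^ x.factorization p := by
    apply Finset.prod_dvd_prod_of_subset
    intro p hp
    exact (Finset.mem_filter.mp hp).2
  have h3 : ∏ p ∈ x.factorization.support, p ^ x.factorization p = x := by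
    have := Nat.factorization_prod_pow_eq_self hx
    rwa [Finsupp.prod] at this
  exact h2.trans (dvd_of_eq h3)
theorem collision_valuation_bound (n m k l δ : ℕ)
    (hδ : δ ≤ 1) (hmk : m < k) (hkn : 2*k < n) (hlδ : δ < l)
    (hcol : Nat.choose (2*n+δ) (n-m) = Nat.choose (2*n+l) (n-k)) :
    (n - k) ^ (2*k + l - m - max (m+δ) (l/2) - Nat.primeCounting (2*(k+l) - δ - 1)) ≤
      (2*k + l) ^ (Nat.primeCounting (2*(k+l) - δ - 1)) *
        Nat.factorial (k - m) * Nat.factorial (l + k - max (m+δ) (l/2)) := by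
  set m₀ := max (m+δ) (l/2) with hm₀def
  have hm₀1 : m + δ ≤ m₀ := le_max_left _ _
  have hm₀2 : l/2 ≤ m₀ := le_max_right _ _
  have hm₀3 : m₀ < k + l := by omega
  set κ := 2*(k+l) - δ - 1 with hκdef
  set π := Nat.primeCounting κ with hπdef
  -- the four products
  set P1 := ∏ x ∈ Finset.Ico (n-k+1) (n-m+1), x with hP1def
  set P2 := ∏ x ∈ Finset.Ico (n+m₀+1) (n+k+l+1), x with hP2def
  set Q := ∏ x ∈ Finset.Ico (n+m+δ+1) (n+k+l+1), x with hQdef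
  set J := ∏ x ∈ Finset.Ico (2*n+δ+1) (2*n+l+1), x with hJdef
  -- factorial identities
  have fact_Ico : ∀ A B : ℕ, A ≤ B →
      Nat.factorial A * ∏ x ∈ Finset.Ico (A+1) (B+1), x = Nat.factorial B := by
    intro A B h
    rw [← Finset.prod_Ico_id_eq_factorial, ← Finset.prod_Ico_id_eq_factorial]
    exact Finset.prod_Ico_consecutive _ (by omega) (by omega)
  have h1 : Nat.factorial (n-k) * P1 = Nat.factorial (n-m) := by
    have := fact_Ico (n-k) (n-m) (by omega); rwa [hP1def]
  have h2 : Nat.factorial (n+m₀) * P2 = Nat.factorial (n+k+l) := by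
    have := fact_Ico (n+m₀) (n+k+l) (by omega); rwa [hP2def]
  have h2' : Nat.factorial (n+m+δ) * Q = Nat.factorial (n+k+l) := by
    have := fact_Ico (n+m+δ) (n+k+l) (by omega); rwa [hQdef]
  have hJ : Nat.factorial (2*n+δ) * J = Nat.factorial (2*n+l) := by
    have := fact_Ico (2*n+δ) (2*n+l) (by omega); rwa [hJdef]
  -- collision equation in factorial form
  have e1 : Nat.choose (2*n+δ) (n-m) * Nat.factorial (n-m) * Nat.factorial (n+m+δ)
      = Nat.factorial (2*n+δ) := by
    have h := Nat.choose_mul_factorial_mul_factorial (show n-m ≤ 2*n+δ by omega)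
    rwa [show 2*n+δ-(n-m) = n+m+δ by omega] at h
  have e2 : Nat.choose (2*n+l) (n-k) * Nat.factorial (n-k) * Nat.factorial (n+k+l)
      = Nat.factorial (2*n+l) := by
    have h := Nat.choose_mul_factorial_mul_factorial (show n-k ≤ 2*n+l by omega)
    rwa [show 2*n+l-(n-k) = n+k+l by omega] at h
  -- the master product identity
  have star : Q = J * P1 := by
    have key : (Nat.factorial (n+m+δ) * Nat.factorial (2*n+δ) * Nat.factorial (n-k)) * Q
        = (Nat.factorial (n+m+δ) * Nat.factorial (2*n+δ) * Nat.factorial (n-k)) * (J * P1) := by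
      calc (Nat.factorial (n+m+δ) * Nat.factorial (2*n+δ) * Nat.factorial (n-k)) * Q
          = (Nat.factorial (n+m+δ) * Q) * (Nat.factorial (2*n+δ) * Nat.factorial (n-k)) := by
            ring
        _ = Nat.factorial (n+k+l) * (Nat.factorial (2*n+δ) * Nat.factorial (n-k)) := by
            rw [h2']
        _ = Nat.factorial (n+k+l) * ((Nat.choose (2*n+δ) (n-m) * Nat.factorial (n-m)
              * Nat.factorial (n+m+δ)) * Nat.factorial (n-k)) := by rw [e1]
        _ = (Nat.choose (2*n+l) (n-k) * Nat.factorial (n-k) * Nat.factorial (n+k+l))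
              * (Nat.factorial (n-m) * Nat.factorial (n+m+δ)) := by rw [hcol]; ring
        _ = Nat.factorial (2*n+l) * (Nat.factorial (n-m) * Nat.factorial (n+m+δ)) := by
            rw [e2]
        _ = (Nat.factorial (2*n+δ) * J) * (Nat.factorial (n-m) * Nat.factorial (n+m+δ)) := by
            rw [hJ]
        _ = (Nat.factorial (2*n+δ) * J) * ((Nat.factorial (n-k) * P1) * Nat.factorial (n+m+δ)) := by
            rw [h1]
        _ = (Nat.factorial (n+m+δ) * Nat.factorial (2*n+δ) * Nat.factorial (n-k)) * (J * P1) := by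
            ring
    exact Nat.eq_of_mul_eq_mul_left (by positivity) key
  have hQsplit : (∏ x ∈ Finset.Ico (n+m+δ+1) (n+m₀+1), x) * P2 = Q :=
    Finset.prod_Ico_consecutive _ (by omega) (by omega)
  -- prime bound claims
  have hprimebound : ∀ p : ℕ, p.Prime → (p ∣ P1 ∨ p ∣ P2) → p ≤ κ := by
    intro p hp hdvd
    have hQdvd : p ∣ Q := by
      rcases hdvd with h | h
      · rw [star]; exact h.mul_left J
      · rw [← hQsplit]; exact h.mul_left _
    obtain ⟨x2, hx2mem, hx2⟩ := hp.prime.exists_mem_finset_dvd hQdvd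
    rw [Finset.mem_Ico] at hx2mem
    rcases hdvd with h | h
    · obtain ⟨x1, hx1mem, hx1⟩ := hp.prime.exists_mem_finset_dvd h
      rw [Finset.mem_Ico] at hx1mem
      have hd : p ∣ x2 - x1 := Nat.dvd_sub hx2 hx1
      have hle := Nat.le_of_dvd (show 0 < x2 - x1 by omega) hd
      omega
    · have hJP : p ∣ J * P1 := star ▸ hQdvd
      obtain ⟨x2', hx2'mem, hx2'⟩ := hp.prime.exists_mem_finset_dvd h
      rw [Finset.mem_Ico] at hx2'mem
      rcases (Nat.Prime.dvd_mul hp).mp hJP with hJd | hP1d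
      · obtain ⟨y, hymem, hy⟩ := hp.prime.exists_mem_finset_dvd hJd
        rw [Finset.mem_Ico] at hymem
        have hd : p ∣ 2 * x2' - y := Nat.dvd_sub (hx2'.mul_left 2) hy
        have hle := Nat.le_of_dvd (show 0 < 2 * x2' - y by omega) hd
        omega
      · obtain ⟨x1, hx1mem, hx1⟩ := hp.prime.exists_mem_finset_dvd hP1d
        rw [Finset.mem_Ico] at hx1mem
        have hd : p ∣ x2' - x1 := Nat.dvd_sub hx2' hx1
        have hle := Nat.le_of_dvd (show 0 < x2' - x1 by omega) hd
        omega
  -- binomial coefficients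
  set B1 := Nat.choose (n-m) (k-m) with hB1def
  set B2 := Nat.choose (n+k+l) (k+l-m₀) with hB2def
  have hB1pos : 0 < B1 := Nat.choose_pos (by omega)
  have hB2pos : 0 < B2 := Nat.choose_pos (by omega)
  have hB1 : P1 = B1 * Nat.factorial (k-m) := by
    have h := Nat.choose_mul_factorial_mul_factorial (show k-m ≤ n-m by omega)
    rw [show n-m-(k-m) = n-k by omega] at h
    have hc : P1 * Nat.factorial (n-k) = B1 * Nat.factorial (k-m) * Nat.factorial (n-k) := by
      calc P1 * Nat.factorial (n-k) = Nat.factorial (n-k) * P1 := mul_comm _ _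
        _ = Nat.factorial (n-m) := h1
        _ = B1 * Nat.factorial (k-m) * Nat.factorial (n-k) := h.symm
    exact Nat.eq_of_mul_eq_mul_right (Nat.factorial_pos _) hc
  have hB2 : P2 = B2 * Nat.factorial (k+l-m₀) := by
    have h := Nat.choose_mul_factorial_mul_factorial (show k+l-m₀ ≤ n+k+l by omega)
    rw [show n+k+l-(k+l-m₀) = n+m₀ by omega] at h
    have hc : P2 * Nat.factorial (n+m₀)
        = B2 * Nat.factorial (k+l-m₀) * Nat.factorial (n+m₀) := by
      calc P2 * Nat.factorial (n+m₀) = Nat.factorial (n+m₀) * P2 := mul_comm _ _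
        _ = Nat.factorial (n+k+l) := h2
        _ = B2 * Nat.factorial (k+l-m₀) * Nat.factorial (n+m₀) := h.symm
    exact Nat.eq_of_mul_eq_mul_right (Nat.factorial_pos _) hc
  -- valuation bounds for B1, B2
  have hval1 : ∀ p e : ℕ, p.Prime →
      (∀ x ∈ Finset.Ico (n-k+1) (n-m+1), x.factorization p ≤ e) →
      B1.factorization p ≤ e := by
    intro p e hp he
    have h := factorization_prod_Ico_le p (n-k+1) (n-m+1) e hp (by omega) he
    rw [show n-m+1-(n-k+1) = k-m by omega, ← hP1def] at h
    have hmul : P1.factorization p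
        = B1.factorization p + (Nat.factorial (k-m)).factorization p := by
      rw [hB1, Nat.factorization_mul hB1pos.ne' (Nat.factorial_ne_zero _), Finsupp.add_apply]
    omega
  have hval2 : ∀ p e : ℕ, p.Prime →
      (∀ x ∈ Finset.Ico (n+m₀+1) (n+k+l+1), x.factorization p ≤ e) →
      B2.factorization p ≤ e := by
    intro p e hp he
    have h := factorization_prod_Ico_le p (n+m₀+1) (n+k+l+1) e hp (by omega) he
    rw [show n+k+l+1-(n+m₀+1) = k+l-m₀ by omega, ← hP2def] at h
    have hmul : P2.factorization p
        = B2.factorization p + (Nat.factorial (k+l-m₀)).factorization p := by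
      rw [hB2, Nat.factorization_mul hB2pos.ne' (Nat.factorial_ne_zero _), Finsupp.add_apply]
    omega
  -- the support of B1*B2
  set S := (B1*B2).factorization.support with hSdef
  have hSprime : ∀ p ∈ S, p.Prime := by
    intro p hpS
    exact Nat.prime_of_mem_primeFactors (by rwa [← Nat.support_factorization])
  have hSdvd : ∀ p ∈ S, p ∣ B1 * B2 := by
    intro p hpS
    exact Nat.dvd_of_mem_primeFactors (by rwa [← Nat.support_factorization])
  -- witnesses of maximal valuation
  have hUne : (Finset.Ico (n-k+1) (n-m+1) ∪ Finset.Ico (n+m₀+1) (n+k+l+1)).Nonempty := by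
    refine ⟨n-k+1, Finset.mem_union_left _ ?_⟩
    rw [Finset.mem_Ico]; omega
  have hwex : ∀ p : ℕ, ∃ x,
      x ∈ Finset.Ico (n-k+1) (n-m+1) ∪ Finset.Ico (n+m₀+1) (n+k+l+1) ∧
      ∀ y ∈ Finset.Ico (n-k+1) (n-m+1) ∪ Finset.Ico (n+m₀+1) (n+k+l+1),
        y.factorization p ≤ x.factorization p := by
    intro p
    obtain ⟨x, hx, hmax⟩ := Finset.exists_mem_eq_sup _ hUne (fun y => y.factorization p)
    exact ⟨x, hx, fun y hy => hmax ▸ Finset.le_sup (f := fun y => y.factorization p) hy⟩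
  choose w hwmem hwmax using hwex
  -- per-prime bound
  have hper : ∀ p ∈ S, p ^ ((B1*B2).factorization p)
      ≤ (2*k+l) * p ^ ((w p).factorization p) := by
    intro p hpS
    have hp := hSprime p hpS
    set E1 := (Finset.Ico (n-k+1) (n-m+1)).sup (fun y => y.factorization p) with hE1
    set E2 := (Finset.Ico (n+m₀+1) (n+k+l+1)).sup (fun y => y.factorization p) with hE2
    have hv1 : B1.factorization p ≤ E1 := hval1 p _ hp (fun x hx => Finset.le_sup (f := fun y => y.factorization p) hx)
    have hv2 : B2.factorization p ≤ E2 := hval2 p _ hp (fun x hx => Finset.le_sup (f := fun y => y.factorization p) hx)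
    have hmax1 : E1 ≤ (w p).factorization p :=
      Finset.sup_le (fun y hy => hwmax p y (Finset.mem_union_left _ hy))
    have hmax2 : E2 ≤ (w p).factorization p :=
      Finset.sup_le (fun y hy => hwmax p y (Finset.mem_union_right _ hy))
    have hvmul : (B1*B2).factorization p = B1.factorization p + B2.factorization p := by
      rw [Nat.factorization_mul hB1pos.ne' hB2pos.ne', Finsupp.add_apply]
    have hminle : p ^ (min E1 E2) ≤ 2*k+l := by
      rcases Nat.eq_zero_or_pos (min E1 E2) with h0 | hpos
      · rw [h0, pow_zero]; omega
      · obtain ⟨x1, hx1, hx1e⟩ := Finset.exists_mem_eq_sup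
          (Finset.Ico (n-k+1) (n-m+1)) ⟨n-k+1, by rw [Finset.mem_Ico]; omega⟩
          (fun y => y.factorization p)
        obtain ⟨x2, hx2, hx2e⟩ := Finset.exists_mem_eq_sup
          (Finset.Ico (n+m₀+1) (n+k+l+1)) ⟨n+m₀+1, by rw [Finset.mem_Ico]; omega⟩
          (fun y => y.factorization p)
        rw [Finset.mem_Ico] at hx1 hx2
        have hd1 : p ^ (min E1 E2) ∣ x1 := by
          refine dvd_trans (pow_dvd_pow p ?_) (Nat.ordProj_dvd x1 p)
          rw [← hx1e]; exact min_le_left _ _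
        have hd2 : p ^ (min E1 E2) ∣ x2 := by
          refine dvd_trans (pow_dvd_pow p ?_) (Nat.ordProj_dvd x2 p)
          rw [← hx2e]; exact min_le_right _ _
        have hdd : p ^ (min E1 E2) ∣ x2 - x1 := Nat.dvd_sub hd2 hd1
        have hle := Nat.le_of_dvd (show 0 < x2 - x1 by omega) hdd
        omega
    calc p ^ ((B1*B2).factorization p) ≤ p ^ (min E1 E2 + max E1 E2) := by
          apply Nat.pow_le_pow_right hp.pos
          rw [min_add_max]; omega
      _ = p ^ (min E1 E2) * p ^ (max E1 E2) := pow_add p _ _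
      _ ≤ (2*k+l) * p ^ ((w p).factorization p) :=
          Nat.mul_le_mul hminle (Nat.pow_le_pow_right hp.pos (max_le hmax1 hmax2))
  -- card of S
  have hScard : S.card ≤ π := by
    have hpc : π = ((Finset.range (κ+1)).filter Nat.Prime).card := by
      rw [hπdef, Nat.primeCounting, Nat.primeCounting', Nat.count_eq_card_filter_range]
    rw [hpc]
    apply Finset.card_le_card
    intro p hpS
    have hp := hSprime p hpS
    have hpκ : p ≤ κ := by
      apply hprimebound p hp
      rcases (Nat.Prime.dvd_mul hp).mp (hSdvd p hpS) with h | h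
      · exact Or.inl (h.trans ⟨Nat.factorial (k-m), hB1⟩)
      · exact Or.inr (h.trans ⟨Nat.factorial (k+l-m₀), hB2⟩)
    simp only [Finset.mem_filter, Finset.mem_range]
    exact ⟨by omega, hp⟩
  -- grouping
  set R := S.image w with hRdef
  have hRsub : R ⊆ Finset.Ico (n-k+1) (n-m+1) ∪ Finset.Ico (n+m₀+1) (n+k+l+1) := by
    intro x hx
    obtain ⟨p, _, rfl⟩ := Finset.mem_image.mp hx
    exact hwmem p
  have hRcard : R.card ≤ π := le_trans (Finset.card_image_le) hScard
  have hRpos : ∀ x ∈ R, 0 < x := by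
    intro x hx
    have := hRsub hx
    rw [Finset.mem_union, Finset.mem_Ico, Finset.mem_Ico] at this
    omega
  have hgroup : ∏ p ∈ S, p ^ ((w p).factorization p) ≤ ∏ x ∈ R, x := by
    rw [← Finset.prod_fiberwise_of_maps_to
      (fun p hp => Finset.mem_image_of_mem w hp)
      (fun p => p ^ ((w p).factorization p))]
    apply Finset.prod_le_prod'
    intro x hx
    have hx0 : 0 < x := hRpos x hx
    have heq : ∏ p ∈ S.filter (fun p => w p = x), p ^ ((w p).factorization p)
        = ∏ p ∈ S.filter (fun p => w p = x), p ^ (x.factorization p) :=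
      Finset.prod_congr rfl (fun p hp => by rw [(Finset.mem_filter.mp hp).2])
    rw [heq]
    exact Nat.le_of_dvd hx0 (prod_pow_factorization_dvd _ _ hx0.ne')
  have hBB : B1 * B2 = ∏ p ∈ S, p ^ ((B1*B2).factorization p) := by
    conv_lhs => rw [← Nat.factorization_prod_pow_eq_self (mul_ne_zero hB1pos.ne' hB2pos.ne')]
    rfl
  have step1 : B1 * B2 ≤ (2*k+l)^S.card * ∏ x ∈ R, x := by
    rw [hBB]
    calc ∏ p ∈ S, p ^ ((B1*B2).factorization p)
        ≤ ∏ p ∈ S, ((2*k+l) * p ^ ((w p).factorization p)) := Finset.prod_le_prod' hper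
      _ = (2*k+l)^S.card * ∏ p ∈ S, p ^ ((w p).factorization p) := by
          rw [Finset.prod_mul_distrib, Finset.prod_const]
      _ ≤ (2*k+l)^S.card * ∏ x ∈ R, x := Nat.mul_le_mul_left _ hgroup
  -- the union decomposition
  have hdisjI : Disjoint (Finset.Ico (n-k+1) (n-m+1)) (Finset.Ico (n+m₀+1) (n+k+l+1)) := by
    rw [Finset.disjoint_left]
    intro x hx1 hx2
    rw [Finset.mem_Ico] at hx1 hx2
    omega
  have hUcard : (Finset.Ico (n-k+1) (n-m+1) ∪ Finset.Ico (n+m₀+1) (n+k+l+1)).card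
      = (k-m) + (k+l-m₀) := by
    rw [Finset.card_union_of_disjoint hdisjI, Nat.card_Ico, Nat.card_Ico]
    omega
  have hPU : P1 * P2 = ∏ x ∈ Finset.Ico (n-k+1) (n-m+1) ∪ Finset.Ico (n+m₀+1) (n+k+l+1), x :=
    (Finset.prod_union hdisjI).symm
  have step2 : (∏ x ∈ R, x) * (n-k)^((k-m)+(k+l-m₀) - R.card) ≤ P1 * P2 := by
    rw [hPU, ← Finset.prod_sdiff hRsub]
    have hsd : (n-k) ^ ((k-m)+(k+l-m₀) - R.card)
        ≤ ∏ x ∈ (Finset.Ico (n-k+1) (n-m+1) ∪ Finset.Ico (n+m₀+1) (n+k+l+1)) \ R, x := by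
      have hcard : ((Finset.Ico (n-k+1) (n-m+1) ∪ Finset.Ico (n+m₀+1) (n+k+l+1)) \ R).card
          = (k-m)+(k+l-m₀) - R.card := by
        rw [Finset.card_sdiff_of_subset hRsub, hUcard]
      rw [← hcard]
      apply Finset.pow_card_le_prod
      intro x hx
      have := (Finset.mem_sdiff.mp hx).1
      rw [Finset.mem_union, Finset.mem_Ico, Finset.mem_Ico] at this
      omega
    calc (∏ x ∈ R, x) * (n-k)^((k-m)+(k+l-m₀) - R.card)
        ≤ (∏ x ∈ R, x) * ∏ x ∈ (Finset.Ico (n-k+1) (n-m+1) ∪ Finset.Ico (n+m₀+1) (n+k+l+1)) \ R, x :=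
          Nat.mul_le_mul_left _ hsd
      _ = (∏ x ∈ (Finset.Ico (n-k+1) (n-m+1) ∪ Finset.Ico (n+m₀+1) (n+k+l+1)) \ R, x) * ∏ x ∈ R, x :=
          mul_comm _ _
  -- final assembly
  have final : (n-k)^((k-m)+(k+l-m₀) - π) * (B1*B2)
      ≤ ((2*k+l)^π * Nat.factorial (k-m) * Nat.factorial (k+l-m₀)) * (B1*B2) := by
    have a1 : (2*k+l)^S.card ≤ (2*k+l)^π := Nat.pow_le_pow_right (by omega) hScard
    have a2 : (n-k)^((k-m)+(k+l-m₀) - π) ≤ (n-k)^((k-m)+(k+l-m₀) - R.card) :=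
      Nat.pow_le_pow_right (by omega) (by omega)
    calc (n-k)^((k-m)+(k+l-m₀) - π) * (B1*B2)
        ≤ (n-k)^((k-m)+(k+l-m₀) - π) * ((2*k+l)^S.card * ∏ x ∈ R, x) :=
          Nat.mul_le_mul_left _ step1
      _ = ((n-k)^((k-m)+(k+l-m₀) - π) * (2*k+l)^S.card) * ∏ x ∈ R, x := by ring
      _ ≤ ((n-k)^((k-m)+(k+l-m₀) - R.card) * (2*k+l)^π) * ∏ x ∈ R, x :=
          Nat.mul_le_mul (Nat.mul_le_mul a2 a1) le_rfl
      _ = (2*k+l)^π * ((∏ x ∈ R, x) * (n-k)^((k-m)+(k+l-m₀) - R.card)) := by ring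
      _ ≤ (2*k+l)^π * (P1 * P2) := Nat.mul_le_mul_left _ step2
      _ = ((2*k+l)^π * Nat.factorial (k-m) * Nat.factorial (k+l-m₀)) * (B1*B2) := by
          rw [hB1, hB2]; ring
  have hgoal : (n-k)^((k-m)+(k+l-m₀) - π)
      ≤ (2*k+l)^π * Nat.factorial (k-m) * Nat.factorial (k+l-m₀) :=
    Nat.le_of_mul_le_mul_right final (by positivity)
  rw [show 2*k+l-m-m₀-π = (k-m)+(k+l-m₀) - π by omega,
    show l+k-m₀ = k+l-m₀ by omega]
  exact hgoal
end
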